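/- arXiv:1911.00272 — 7 statements merged into one kernel-verified Lean document; each statement's English description precedes it below -/
import Mathlib

section
/- A square row-stochastic matrix T satisfies |det(T)| = 1 if and only if T is a permutation matrix. -/
/-!
Write `P f = ∏ i, T i (f i)` for `f : n → n`. For a nonnegative matrix with unit row sums the `P f`
are nonnegative and sum to `∏ i, ∑ j, T i j = 1`, while the Leibniz formula gives
`|det T| ≤ ∑ σ, P σ`, a sum over the injective `f` only. So `|det T| = 1` forces `P f = 0` for every
non-injective `f`: any choice of one nonzero entry per row hits every column exactly once. If a row
had a second nonzero entry, moving that row's choice onto it would give a non-injective choice,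
so each row has a single nonzero entry, equal to `1`, in the column of a permutation.
-/

/-- A matrix is a permutation matrix if there is a permutation `π` with
`T c (π c) = 1` for all `c` and all other entries `0`. -/
def IsPermMatrix {C : ℕ} (T : Matrix (Fin C) (Fin C) ℝ) : Prop :=
  ∃ π : Equiv.Perm (Fin C), ∀ i j, T i j = if π i = j then 1 else 0

open Finset Function Equiv

namespace Matrix

variable {n R : Type*} [Fintype n] [DecidableEq n]

lemma abs_det_le_sum_perm_prod [CommRing R] [LinearOrder R] [IsOrderedRing R]
    {T : Matrix n n R} (hT : ∀ i j, 0 ≤ T i j) :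
    |T.det| ≤ ∑ σ : Perm n, ∏ i, T i (σ i) := by
  rw [← det_transpose, det_apply']
  simp only [transpose_apply]
  refine (abs_sum_le_sum_abs _ _).trans_eq (sum_congr rfl fun σ _ => ?_)
  rw [abs_mul, abs_of_nonneg (prod_nonneg fun i _ => hT i (σ i)), abs_unit_intCast, one_mul]

lemma sum_perm_prod_add_prod_le_prod_sum [CommSemiring R] [PartialOrder R] [IsOrderedRing R]
    {T : Matrix n n R} (hT : ∀ i j, 0 ≤ T i j) {f : n → n} (hf : ¬ Injective f) :
    ∑ σ : Perm n, ∏ i, T i (σ i) + ∏ i, T i (f i) ≤ ∏ i, ∑ j, T i j := by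
  let coeFn : Perm n ↪ (n → n) := ⟨fun σ => σ, DFunLike.coe_injective⟩
  have hf_notMem : f ∉ univ.map coeFn := by
    simp only [mem_map, mem_univ, true_and, not_exists]
    exact fun σ hσ => hf (hσ ▸ σ.injective)
  have hperm : ∑ σ : Perm n, ∏ i, T i (σ i) = ∑ g ∈ univ.map coeFn, ∏ i, T i (g i) :=
    (sum_map univ coeFn fun g => ∏ i, T i (g i)).symm
  rw [Fintype.prod_sum T, hperm, add_comm, ← sum_insert (f := fun g => ∏ i, T i (g i)) hf_notMem]
  exact sum_le_sum_of_subset_of_nonneg (subset_univ _)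
    fun g _ _ => prod_nonneg fun i _ => hT i (g i)

lemma prod_eq_zero_of_abs_det_eq_one [CommRing R] [LinearOrder R] [IsOrderedRing R]
    {T : Matrix n n R} (hT : ∀ i j, 0 ≤ T i j) (hrow : ∀ i, ∑ j, T i j = 1)
    (hdet : |T.det| = 1) {f : n → n} (hf : ¬ Injective f) :
    ∏ i, T i (f i) = 0 := by
  have h := add_le_add_left (abs_det_le_sum_perm_prod hT) (∏ i, T i (f i)) |>.trans
    (sum_perm_prod_add_prod_le_prod_sum hT hf)
  simp only [hdet, hrow, prod_const_one] at h
  exact le_antisymm (by simpa using h) (prod_nonneg fun i _ => hT i (f i))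

lemma exists_perm_eq_ite_of_forall_injective [AddCommMonoidWithOne R] [NeZero (1 : R)]
    {T : Matrix n n R} (hrow : ∀ i, ∑ j, T i j = 1)
    (hinj : ∀ f : n → n, (∀ i, T i (f i) ≠ 0) → Injective f) :
    ∃ σ : Perm n, ∀ i j, T i j = if σ i = j then 1 else 0 := by
  choose f _ hf using fun i => exists_ne_zero_of_sum_ne_zero ((hrow i).trans_ne one_ne_zero)
  have hf_inj : Injective f := hinj f hf
  have hsupp : ∀ i j, T i j ≠ 0 → f i = j := by
    intro i j hij
    obtain ⟨k, rfl⟩ := Finite.surjective_of_injective hf_inj j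
    by_contra hik
    have hki : k ≠ i := fun h => hik (h ▸ rfl)
    have := hinj (update f i (f k)) fun m => by
      rcases eq_or_ne m i with rfl | hm
      · simpa using hij
      · simpa [hm] using hf m
    exact hki (this ((update_of_ne hki _ _).trans (update_self i (f k) f).symm))
  refine ⟨Equiv.ofBijective f hf_inj.bijective_of_finite, fun i j => ?_⟩
  rw [ofBijective_apply]
  split_ifs with h
  · subst h
    rw [← hrow i, sum_eq_single (f i) (fun j _ hj => by_contra fun h => hj (hsupp i j h).symm)
      (by simp)]
  · exact by_contra fun h' => h (hsupp i j h')

end Matrix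

/-- A square row-stochastic matrix `T` satisfies `|det T| = 1`
iff `T` is a permutation matrix. -/
theorem abs_det_eq_one_iff_perm_of_row_stochastic {C : ℕ} (T : Matrix (Fin C) (Fin C) ℝ)
    (hrange : ∀ i j, 0 ≤ T i j ∧ T i j ≤ 1)
    (hrow : ∀ i, ∑ j, T i j = 1) :
    |T.det| = 1 ↔ IsPermMatrix T := by
  constructor
  · intro hdet
    refine T.exists_perm_eq_ite_of_forall_injective hrow fun f hf => ?_
    by_contra hf_inj
    exact prod_ne_zero_iff.2 (fun i _ => hf i)
      (T.prod_eq_zero_of_abs_det_eq_one (fun i j => (hrange i j).1) hrow hdet hf_inj)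
  · rintro ⟨π, hπ⟩
    have hT : T = π.permMatrix ℝ := by
      ext i j
      simp [hπ, Perm.permMatrix, PEquiv.toMatrix_apply]
    rw [hT, Matrix.det_permutation, abs_unit_intCast]
end

section
/- For any random variables X, Y with common finite support of size C, DMI(X;Y) ≤ (1/C)^C. -/
/-!
The column sums of the joint distribution matrix `U_{X,Y}` are the marginal probabilities
`P[Y = y]`, which sum to `1`. For a nonnegative matrix, `|det|` is at most the product of the
column sums, and by AM-GM a product of `C` nonnegative numbers summing to `1` is at most
`(1/C)^C`.
-/

open MeasureTheory

/-- The joint distribution matrix of two random variables valued in `Fin C`. -/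
noncomputable def jointMatrix {Ω : Type*} [MeasurableSpace Ω] (μ : Measure Ω) {C : ℕ}
    (X Y : Ω → Fin C) : Matrix (Fin C) (Fin C) ℝ :=
  Matrix.of fun x y => (μ {ω | X ω = x ∧ Y ω = y}).toReal

/-- Determinant based mutual information: `DMI(X;Y) = |det U_{X,Y}|`. -/
noncomputable def DMI {Ω : Type*} [MeasurableSpace Ω] (μ : Measure Ω) {C : ℕ}
    (X Y : Ω → Fin C) : ℝ :=
  |(jointMatrix μ X Y).det|

theorem Matrix.abs_det_le_prod_sum_col_of_nonneg {n R : Type*} [Fintype n] [DecidableEq n]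
    [CommRing R] [LinearOrder R] [IsStrictOrderedRing R] {A : Matrix n n R}
    (hA : ∀ i j, 0 ≤ A i j) : |A.det| ≤ ∏ j, ∑ i, A i j := by
  have hprod : ∀ f : n → n, 0 ≤ ∏ j, A (f j) j := fun f => Finset.prod_nonneg fun j _ => hA _ _
  let coeFn : Equiv.Perm n ↪ (n → n) := ⟨(⇑), DFunLike.coe_injective⟩
  -- the Leibniz expansion is the part, indexed by permutations, of the expansion of the product
  rw [det_apply', Fintype.prod_sum]
  calc |∑ σ : Equiv.Perm n, ((Equiv.Perm.sign σ : ℤ) : R) * ∏ j, A (σ j) j|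
      ≤ ∑ σ : Equiv.Perm n, ∏ j, A (σ j) j := by
        refine (Finset.abs_sum_le_sum_abs _ _).trans_eq (Finset.sum_congr rfl fun σ _ => ?_)
        rw [abs_mul, abs_unit_intCast, one_mul, abs_of_nonneg (hprod σ)]
    _ = ∑ f ∈ Finset.univ.map coeFn, ∏ j, A (f j) j := by rw [Finset.sum_map]; rfl
    _ ≤ ∑ f : n → n, ∏ j, A (f j) j :=
        Finset.sum_le_sum_of_subset_of_nonneg (Finset.subset_univ _) fun f _ _ => hprod f

theorem Real.prod_le_sum_div_card_pow {ι : Type*} [Fintype ι] {z : ι → ℝ} (hz : ∀ i, 0 ≤ z i) :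
    ∏ i, z i ≤ ((∑ i, z i) / Fintype.card ι) ^ Fintype.card ι := by
  rcases isEmpty_or_nonempty ι with _ | _
  · simp
  have hn : Fintype.card ι ≠ 0 := Fintype.card_ne_zero
  have hprod : 0 ≤ ∏ i, z i := Finset.prod_nonneg fun i _ => hz i
  have amgm := Real.geom_mean_le_arith_mean Finset.univ (fun _ => 1) z (fun _ _ => zero_le_one)
    (by simp [Nat.pos_of_ne_zero hn]) fun i _ => hz i
  simp only [Real.rpow_one, Finset.sum_const, Finset.card_univ, nsmul_eq_mul, mul_one,
    one_mul] at amgm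
  calc ∏ i, z i = ((∏ i, z i) ^ (Fintype.card ι : ℝ)⁻¹) ^ Fintype.card ι :=
        (Real.rpow_inv_natCast_pow hprod hn).symm
    _ ≤ ((∑ i, z i) / Fintype.card ι) ^ Fintype.card ι := by gcongr

section JointMatrix

variable {Ω : Type*} [MeasurableSpace Ω] {μ : Measure Ω} {C : ℕ} {X Y : Ω → Fin C}

theorem jointMatrix_nonneg (x y : Fin C) : 0 ≤ jointMatrix μ X Y x y := ENNReal.toReal_nonneg

theorem sum_jointMatrix_col [IsFiniteMeasure μ] (hX : Measurable X) (y : Fin C) :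
    ∑ x, jointMatrix μ X Y x y = μ.real (Y ⁻¹' {y}) := by
  have hfib : ∀ x, MeasurableSet (X ⁻¹' {x}) := fun x => hX (measurableSet_singleton x)
  calc ∑ x, jointMatrix μ X Y x y = ∑ x, (μ.restrict (Y ⁻¹' {y})).real (X ⁻¹' {x}) := by
        refine Finset.sum_congr rfl fun x _ => ?_
        rw [measureReal_restrict_apply (hfib x)]
        rfl
    _ = μ.real (Y ⁻¹' {y}) := by
        rw [sum_measureReal_preimage_singleton _ fun x _ => hfib x, Finset.coe_univ,
          Set.preimage_univ, measureReal_restrict_apply_univ]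

end JointMatrix

/-- for any random variables `X, Y` with common finite support of size `C`,
`DMI(X;Y) ≤ (1/C)^C`. -/
theorem DMI_le_bound {Ω : Type*} [MeasurableSpace Ω] (μ : Measure Ω)
    [IsProbabilityMeasure μ] {C : ℕ} (X Y : Ω → Fin C)
    (hX : Measurable X) (hY : Measurable Y) :
    DMI μ X Y ≤ (1 / (C : ℝ)) ^ C := by
  have hmarginal : ∑ y, μ.real (Y ⁻¹' {y}) = 1 := by
    rw [sum_measureReal_preimage_singleton _ fun y _ => hY (measurableSet_singleton y),
      Finset.coe_univ, Set.preimage_univ, probReal_univ]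
  calc DMI μ X Y ≤ ∏ y, ∑ x, jointMatrix μ X Y x y :=
        Matrix.abs_det_le_prod_sum_col_of_nonneg jointMatrix_nonneg
    _ = ∏ y, μ.real (Y ⁻¹' {y}) := by simp_rw [sum_jointMatrix_col hX]
    _ ≤ (1 / (C : ℝ)) ^ C := by
        simpa [hmarginal] using Real.prod_le_sum_div_card_pow fun y : Fin C =>
          measureReal_nonneg (μ := μ) (s := Y ⁻¹' {y})
end

section
/- Relative invariance of DMI: if X' is conditionally independent of Y given X (all three variables with the same finite support C), then DMI(X';Y) = DMI(X;Y) · |det(U_{X'|X})|, where U_{X'|X} is the transition matrix with entries P[X'=x' | X=x]. -/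
open MeasureTheory

/-- The transition matrix `U_{X'|X}`: entry `(x, x')` is `P[X' = x' | X = x]`. -/
noncomputable def transMatrix {Ω : Type*} [MeasurableSpace Ω] (μ : Measure Ω) {C : ℕ}
    (X X' : Ω → Fin C) : Matrix (Fin C) (Fin C) ℝ :=
  Matrix.of fun x x' => (μ {ω | X' ω = x' ∧ X ω = x}).toReal / (μ {ω | X ω = x}).toReal

/-!
Conditional independence says `P[X'=x', Y=y, X=x] = P[X'=x' | X=x] · P[X=x, Y=y]`; summing over
`x` expresses `U_{X',Y}` as `U_{X'|X}ᵀ · U_{X,Y}`, and the determinant is multiplicative.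
-/

open Function
open scoped Matrix

theorem eq_div_mul_of_mul_eq {a b c d : ℝ} (hb : a = 0 → b = 0) (h : a * b = c * d) :
    b = c / a * d := by
  rcases eq_or_ne a 0 with rfl | ha
  · simp [hb rfl]
  · rw [div_mul_eq_mul_div, eq_div_iff ha, ← h, mul_comm]

theorem measure_eq_tsum_inter_preimage_singleton {Ω α : Type*} [MeasurableSpace Ω]
    [MeasurableSpace α] [MeasurableSingletonClass α] [Countable α] (μ : Measure Ω)
    {X : Ω → α} (hX : Measurable X) (t : Set Ω) :
    μ t = ∑' a, μ (t ∩ X ⁻¹' {a}) := by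
  have hdisj : Pairwise (Disjoint on fun a => X ⁻¹' {a}) := fun a b hab =>
    (Set.disjoint_singleton.2 hab).preimage X
  have hmeas : ∀ a, MeasurableSet (X ⁻¹' {a}) := fun a => hX (measurableSet_singleton a)
  have hcover : ⋃ a, X ⁻¹' {a} = Set.univ := by
    rw [← Set.preimage_iUnion, Set.iUnion_singleton_eq_range, Set.range_id', Set.preimage_univ]
  calc μ t = μ.restrict (⋃ a, X ⁻¹' {a}) t := by rw [hcover, Measure.restrict_univ]
    _ = ∑' a, μ (t ∩ X ⁻¹' {a}) := by
      simp only [Measure.restrict_iUnion hdisj hmeas, Measure.sum_apply_of_countable,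
        Measure.restrict_apply' (hmeas _)]

section

variable {Ω : Type*} [MeasurableSpace Ω] (μ : Measure Ω) [IsFiniteMeasure μ] {C : ℕ}
  (X X' Y : Ω → Fin C)

theorem toReal_measure_eq_transMatrix_mul_jointMatrix {x x' y : Fin C}
    (hci : μ {ω | X ω = x} * μ {ω | X' ω = x' ∧ Y ω = y ∧ X ω = x} =
      μ {ω | X' ω = x' ∧ X ω = x} * μ {ω | Y ω = y ∧ X ω = x}) :
    (μ {ω | X' ω = x' ∧ Y ω = y ∧ X ω = x}).toReal =
      transMatrix μ X X' x x' * jointMatrix μ X Y x y := by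
  -- If `P[X = x] = 0`, row `x` of `U_{X'|X}` is `0` (division by zero), and both sides vanish.
  have hnull : (μ {ω | X ω = x}).toReal = 0 →
      (μ {ω | X' ω = x' ∧ Y ω = y ∧ X ω = x}).toReal = 0 := fun h => by
    rw [ENNReal.toReal_eq_zero_iff, or_iff_left (measure_ne_top _ _)] at h
    rw [measure_mono_null (fun ω hω => hω.2.2) h, ENNReal.toReal_zero]
  have hswap : {ω | X ω = x ∧ Y ω = y} = {ω | Y ω = y ∧ X ω = x} :=
    Set.ext fun _ => and_comm
  rw [transMatrix, jointMatrix, Matrix.of_apply, Matrix.of_apply, hswap]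
  exact eq_div_mul_of_mul_eq hnull <| by
    simpa only [ENNReal.toReal_mul] using congrArg ENNReal.toReal hci

theorem jointMatrix_eq_transpose_transMatrix_mul (hX : Measurable X)
    (hci : ∀ x x' y,
      μ {ω | X ω = x} * μ {ω | X' ω = x' ∧ Y ω = y ∧ X ω = x} =
        μ {ω | X' ω = x' ∧ X ω = x} * μ {ω | Y ω = y ∧ X ω = x}) :
    jointMatrix μ X' Y = (transMatrix μ X X')ᵀ * jointMatrix μ X Y := by
  ext x' y
  rw [Matrix.mul_apply, jointMatrix, Matrix.of_apply,
    measure_eq_tsum_inter_preimage_singleton μ hX, tsum_fintype,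
    ENNReal.toReal_sum fun _ _ => measure_ne_top _ _]
  refine Finset.sum_congr rfl fun x _ => ?_
  have hassoc :
      {ω | X' ω = x' ∧ Y ω = y} ∩ X ⁻¹' {x} = {ω | X' ω = x' ∧ Y ω = y ∧ X ω = x} :=
    Set.ext fun _ => and_assoc
  rw [hassoc, toReal_measure_eq_transMatrix_mul_jointMatrix μ X X' Y (hci x x' y),
    Matrix.transpose_apply, jointMatrix]

end

theorem DMI_relative_invariance_general {Ω : Type*} [MeasurableSpace Ω] (μ : Measure Ω)
    [IsProbabilityMeasure μ] {C : ℕ} (X X' Y : Ω → Fin C)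
    (hX : Measurable X)
    (hci : ∀ x x' y,
      μ {ω | X ω = x} * μ {ω | X' ω = x' ∧ Y ω = y ∧ X ω = x} =
        μ {ω | X' ω = x' ∧ X ω = x} * μ {ω | Y ω = y ∧ X ω = x}) :
    DMI μ X' Y = DMI μ X Y * |(transMatrix μ X X').det| := by
  rw [DMI, DMI, jointMatrix_eq_transpose_transMatrix_mul μ X X' Y hX hci, Matrix.det_mul,
    Matrix.det_transpose, abs_mul, mul_comm]

/-- relative invariance of DMI: if `X'` is conditionally independent of `Y`
given `X`, then `DMI(X';Y) = DMI(X;Y) · |det U_{X'|X}|`. -/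
theorem DMI_relative_invariance {Ω : Type*} [MeasurableSpace Ω] (μ : Measure Ω)
    [IsProbabilityMeasure μ] {C : ℕ} (X X' Y : Ω → Fin C)
    (hX : Measurable X) (hX' : Measurable X') (hY : Measurable Y)
    (hci : ∀ x x' y,
      μ {ω | X ω = x} * μ {ω | X' ω = x' ∧ Y ω = y ∧ X ω = x} =
        μ {ω | X' ω = x' ∧ X ω = x} * μ {ω | Y ω = y ∧ X ω = x}) :
    DMI μ X' Y = DMI μ X Y * |(transMatrix μ X X').det| :=
  DMI_relative_invariance_general μ X X' Y hX hci
end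

section
/- Information monotonicity of DMI: if X' is conditionally independent of Y given X (all with common finite support), then DMI(X';Y) ≤ DMI(X;Y). -/
/-!
Conditional independence of `X'` and `Y` given `X` says exactly that
`P(X' = x', Y = y, X = x) = P(X' = x' | X = x) * P(X = x, Y = y)`, so summing over `x` factors the
joint matrix as `U_{X',Y} = Tᵀ * U_{X,Y}` with `T x x' = P(X' = x' | X = x)`. The matrix `T` is
nonnegative with row sums at most `1` (a row with `P(X = x) = 0` is zero), hence
`|det T| ≤ ∏ i, ∑ j, |T i j| ≤ 1`, and `DMI(X';Y) = |det T| * DMI(X;Y)`.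
-/

open MeasureTheory

namespace Matrix

open Finset

variable {R S : Type*} [CommRing R] [Nontrivial R]
  [CommRing S] [LinearOrder S] [IsStrictOrderedRing S] {n : Type*} [Fintype n] [DecidableEq n]

theorem det_le_prod_sum_row (A : Matrix n n R) (abv : AbsoluteValue R S) :
    abv A.det ≤ ∏ i, ∑ j, abv (A i j) :=
  calc
    abv A.det = abv (∑ σ : Equiv.Perm n, Equiv.Perm.sign σ • ∏ i, A i (σ i)) := by
      rw [← det_transpose, det_apply]; rfl
    _ ≤ ∑ σ : Equiv.Perm n, abv (Equiv.Perm.sign σ • ∏ i, A i (σ i)) := abv.sum_le _ _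
    _ = ∑ σ : Equiv.Perm n, ∏ i, abv (A i (σ i)) :=
      sum_congr rfl fun σ _ => by rw [abv.map_units_int_smul, abv.map_prod]
    _ ≤ ∑ f : n → n, ∏ i, abv (A i (f i)) := by
      let e : Equiv.Perm n ↪ (n → n) := ⟨_, Equiv.coe_fn_injective⟩
      calc _ = ∑ f ∈ univ.map e, ∏ i, abv (A i (f i)) := (sum_map univ e _).symm
        _ ≤ _ := sum_le_sum_of_subset_of_nonneg (subset_univ _) fun _ _ _ =>
          prod_nonneg fun _ _ => abv.nonneg _
    _ = ∏ i, ∑ j, abv (A i j) := (Fintype.prod_sum fun i j => abv (A i j)).symm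

theorem abs_det_le_one_of_nonneg_of_sum_row_le_one {A : Matrix n n S} (h0 : ∀ i j, 0 ≤ A i j)
    (h1 : ∀ i, ∑ j, A i j ≤ 1) : |A.det| ≤ 1 := by
  calc |A.det| ≤ ∏ i, ∑ j, |A i j| := A.det_le_prod_sum_row AbsoluteValue.abs
    _ = ∏ i, ∑ j, A i j := by simp only [abs_of_nonneg (h0 _ _)]
    _ ≤ 1 := prod_le_one (fun i _ => sum_nonneg fun j _ => h0 i j) fun i _ => h1 i

end Matrix

section

open ProbabilityTheory Finset
open scoped Matrix

variable {Ω : Type*} [MeasurableSpace Ω] (μ : Measure Ω)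

theorem sum_measure_inter_fiber {α : Type*} [Fintype α] [MeasurableSpace α]
    [MeasurableSingletonClass α] {Z : Ω → α} (hZ : Measurable Z) (s : Set Ω) :
    ∑ z, μ (s ∩ {ω | Z ω = z}) = μ s := by
  have := sum_measure_preimage_singleton (μ := μ.restrict s) univ
    fun z _ => hZ (measurableSet_singleton z)
  simp only [Measure.restrict_apply (hZ (measurableSet_singleton _)), Set.inter_comm,
    coe_univ, Set.preimage_univ, Measure.restrict_apply_univ] at this
  exact this

theorem cond_mul_measure_inter_eq [IsFiniteMeasure μ] {s t u : Set Ω} (hs : MeasurableSet s)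
    (h : μ s * μ (t ∩ (u ∩ s)) = μ (t ∩ s) * μ (u ∩ s)) :
    μ[t | s] * μ (u ∩ s) = μ (t ∩ (u ∩ s)) := by
  rcases eq_or_ne (μ s) 0 with hs0 | hs0
  · simp [measure_mono_null Set.inter_subset_right hs0, measure_mono_null
      (Set.inter_subset_right.trans Set.inter_subset_right) hs0]
  · rw [cond_apply hs, Set.inter_comm s t, mul_assoc, ← h, ← mul_assoc,
      ENNReal.inv_mul_cancel hs0 (measure_ne_top μ s), one_mul]

noncomputable def transitionMatrix {α β : Type*} (X : Ω → α) (X' : Ω → β) :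
    Matrix α β ℝ :=
  Matrix.of fun x x' => μ[|{ω | X ω = x}].real {ω | X' ω = x'}

theorem sum_transitionMatrix_le_one {α β : Type*}
    [Fintype β] [MeasurableSpace β] [MeasurableSingletonClass β]
    (X : Ω → α) {X' : Ω → β} (hX' : Measurable X') (x : α) :
    ∑ x', transitionMatrix μ X X' x x' ≤ 1 := by
  have := sum_measureReal_preimage_singleton (μ := μ[|{ω | X ω = x}]) univ
    fun x' _ => hX' (measurableSet_singleton x')
  simp only [coe_univ, Set.preimage_univ] at this
  exact this.le.trans measureReal_le_one

theorem jointMatrix_eq_transpose_transitionMatrix_mul [IsFiniteMeasure μ] {C : ℕ}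
    {X : Ω → Fin C} (X' Y : Ω → Fin C) (hX : Measurable X)
    (hci : ∀ x x' y,
      μ {ω | X ω = x} * μ {ω | X' ω = x' ∧ Y ω = y ∧ X ω = x} =
        μ {ω | X' ω = x' ∧ X ω = x} * μ {ω | Y ω = y ∧ X ω = x}) :
    jointMatrix μ X' Y = (transitionMatrix μ X X')ᵀ * jointMatrix μ X Y := by
  ext x' y
  have hmul : ∀ x, transitionMatrix μ X X' x x' * jointMatrix μ X Y x y =
      (μ {ω | X' ω = x' ∧ Y ω = y ∧ X ω = x}).toReal := by
    intro x
    have hswap : {ω | X ω = x ∧ Y ω = y} = {ω | Y ω = y ∧ X ω = x} := Set.ext fun _ => and_comm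
    rw [transitionMatrix, jointMatrix, Matrix.of_apply, Matrix.of_apply, hswap, measureReal_def,
      ← ENNReal.toReal_mul]
    exact congrArg ENNReal.toReal
      (cond_mul_measure_inter_eq μ (hX (measurableSet_singleton x)) (hci x x' y))
  simp only [Matrix.mul_apply, Matrix.transpose_apply, hmul]
  rw [← ENNReal.toReal_sum fun _ _ => measure_ne_top μ _, jointMatrix, Matrix.of_apply,
    ← sum_measure_inter_fiber μ hX]
  congr! 3 with x
  exact Set.ext fun _ => and_assoc

end

theorem DMI_information_monotone_general {Ω : Type*} [MeasurableSpace Ω] (μ : Measure Ω)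
    [IsProbabilityMeasure μ] {C : ℕ} (X X' Y : Ω → Fin C)
    (hX : Measurable X) (hX' : Measurable X')
    (hci : ∀ x x' y,
      μ {ω | X ω = x} * μ {ω | X' ω = x' ∧ Y ω = y ∧ X ω = x} =
        μ {ω | X' ω = x' ∧ X ω = x} * μ {ω | Y ω = y ∧ X ω = x}) :
    DMI μ X' Y ≤ DMI μ X Y := by
  have hT : |(transitionMatrix μ X X').det| ≤ 1 :=
    Matrix.abs_det_le_one_of_nonneg_of_sum_row_le_one (fun _ _ => measureReal_nonneg)
      (sum_transitionMatrix_le_one μ X hX')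
  rw [DMI, DMI, jointMatrix_eq_transpose_transitionMatrix_mul μ X' Y hX hci, Matrix.det_mul,
    Matrix.det_transpose, abs_mul]
  exact mul_le_of_le_one_left (abs_nonneg _) hT

/-- information monotonicity of DMI: if `X'` is conditionally independent of
`Y` given `X` (all with common finite support), then `DMI(X';Y) ≤ DMI(X;Y)`. -/
theorem DMI_information_monotone {Ω : Type*} [MeasurableSpace Ω] (μ : Measure Ω)
    [IsProbabilityMeasure μ] {C : ℕ} (X X' Y : Ω → Fin C)
    (hX : Measurable X) (hX' : Measurable X') (hY : Measurable Y)
    (hci : ∀ x x' y,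
      μ {ω | X ω = x} * μ {ω | X' ω = x' ∧ Y ω = y ∧ X ω = x} =
        μ {ω | X' ω = x' ∧ X ω = x} * μ {ω | Y ω = y ∧ X ω = x}) :
    DMI μ X' Y ≤ DMI μ X Y :=
  DMI_information_monotone_general μ X X' Y hX hX' hci
end

section
/- Unbiased estimator of the joint-distribution determinant: let (c_i^t, c_j^t) for t = 1,...,T be i.i.d. samples from a distribution U on C × C (with C = {1,...,C} and T ≥ C), and let M be the C×C count matrix M(c,c') = Σ_t 1[(c_i^t,c_j^t)=(c,c')]. Then E[det(M)] = binom(T,C)·C! · det(U), where U is viewed as a C×C matrix. -/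
open MeasureTheory ProbabilityTheory Finset

/-! Expand `det M` by the Leibniz formula and each product `∏ c, M (σ c) c` of counts into a sum,
over maps `f` from matrix indices to sample indices, of `∏ c, 1[ω (f c) = (σ c, c)]`. If `f` is
not injective, one sample would have to equal two distinct pairs, so the term vanishes; if `f` is
injective, the factors concern distinct independent samples and the expectation is
`∏ c, U (σ c) c`. There are `T (T - 1) ⋯ (T - C + 1)` injective `f`, and this factor comes out of
the Leibniz sum, leaving `det U`.
-/

theorem Fintype.card_filter_injective {κ ι : Type*} [Fintype κ] [Fintype ι] [DecidableEq κ]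
    [DecidableEq ι] :
    #{f : κ → ι | f.Injective} = (Fintype.card ι).descFactorial (Fintype.card κ) := by
  rw [← Fintype.card_subtype, Fintype.card_congr (Equiv.subtypeInjectiveEquivEmbedding κ ι),
    Fintype.card_embedding_eq]

theorem prod_ite_comp_eq_zero_of_not_injective {ι κ α R : Type*} [Fintype κ]
    [CommMonoidWithZero R] [DecidableEq α] {f : κ → ι} (hf : ¬ f.Injective) {p : κ → α}
    (hp : p.Injective) (ω : ι → α) :
    ∏ c, (if ω (f c) = p c then (1 : R) else 0) = 0 := by
  obtain ⟨c, c', hfc, hcc'⟩ := Function.not_injective_iff.1 hf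
  by_cases hc : ω (f c) = p c
  · have : ω (f c') ≠ p c' := by rw [← hfc, hc]; exact hp.ne hcc'
    exact prod_eq_zero (mem_univ c') (if_neg this)
  · exact prod_eq_zero (mem_univ c) (if_neg hc)

theorem integral_ite_eq_measureReal {α : Type*} [MeasurableSpace α] [MeasurableSingletonClass α]
    (ν : Measure α) (b : α) [DecidablePred (· = b)] :
    ∫ a, (if a = b then (1 : ℝ) else 0) ∂ν = ν.real {b} := by
  rw [← integral_indicator_one (measurableSet_singleton b)]
  congr with a
  simp [Set.indicator_apply]

section IIDSample

variable {ι κ α : Type*} [Fintype ι] [Fintype κ] [MeasurableSpace α]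
  (ν : Measure α) [IsProbabilityMeasure ν]

theorem integral_pi_prod_comp_of_injective {f : κ → ι} (hf : f.Injective)
    (g : κ → α → ℝ) (hg : ∀ c, AEStronglyMeasurable (g c) ν) :
    ∫ ω, ∏ c, g c (ω (f c)) ∂(Measure.pi fun _ : ι => ν) = ∏ c, ∫ a, g c a ∂ν := by
  have hindep : iIndepFun (fun c (ω : ι → α) => ω (f c)) (Measure.pi fun _ => ν) :=
    (iIndepFun_pi (X := fun _ => id) fun _ => aemeasurable_id).precomp hf
  have hmap : ∀ c, (Measure.pi fun _ : ι => ν).map (fun ω => ω (f c)) = ν :=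
    fun c => (measurePreserving_eval _ (f c)).map_eq
  have hg' : ∀ c, AEStronglyMeasurable (g c) ((Measure.pi fun _ => ν).map fun ω => ω (f c)) :=
    fun c => by rw [hmap c]; exact hg c
  rw [hindep.integral_fun_prod_comp (fun c => (measurable_pi_apply _).aemeasurable) hg']
  refine prod_congr rfl fun c _ => ?_
  rw [← integral_map (measurable_pi_apply _).aemeasurable (hg' c), hmap c]

theorem integral_prod_count_of_injective [Finite α] [MeasurableSingletonClass α] [DecidableEq α]
    {p : κ → α} (hp : p.Injective) :
    ∫ ω, ∏ c, (∑ t, if ω t = p c then (1 : ℝ) else 0) ∂(Measure.pi fun _ : ι => ν)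
      = (Fintype.card ι).descFactorial (Fintype.card κ) * ∏ c, ν.real {p c} := by
  classical
  have hterm : ∀ f : κ → ι,
      ∫ ω, ∏ c, (if ω (f c) = p c then (1 : ℝ) else 0) ∂(Measure.pi fun _ : ι => ν)
        = if f.Injective then ∏ c, ν.real {p c} else 0 := by
    intro f
    split_ifs with hf
    · rw [integral_pi_prod_comp_of_injective ν hf (fun c a => if a = p c then 1 else 0)
        fun _ => (measurable_of_finite _).aestronglyMeasurable]
      simp only [integral_ite_eq_measureReal]
    · simp only [prod_ite_comp_eq_zero_of_not_injective hf hp, integral_zero]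
  calc _ = ∫ ω, ∑ f : κ → ι, ∏ c, (if ω (f c) = p c then (1 : ℝ) else 0)
          ∂(Measure.pi fun _ : ι => ν) := by simp only [Fintype.prod_sum]
    _ = ∑ f : κ → ι, if f.Injective then ∏ c, ν.real {p c} else 0 := by
      rw [integral_finsetSum _ fun _ _ => Integrable.of_finite]
      exact sum_congr rfl fun f _ => hterm f
    _ = _ := by
      rw [sum_ite, sum_const, sum_const_zero, add_zero, nsmul_eq_mul,
        Fintype.card_filter_injective]

end IIDSample

theorem integral_det_countMatrix {ι n : Type*} [Fintype ι] [Fintype n] [DecidableEq n]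
    [MeasurableSpace n] [MeasurableSingletonClass n] (ν : Measure (n × n))
    [IsProbabilityMeasure ν] :
    ∫ ω, (Matrix.of fun c c' : n => ∑ t : ι, if ω t = (c, c') then (1 : ℝ) else 0).det
        ∂(Measure.pi fun _ : ι => ν)
      = (Fintype.card ι).descFactorial (Fintype.card n) *
        (Matrix.of fun c c' : n => ν.real {(c, c')}).det := by
  simp only [Matrix.det_apply', Matrix.of_apply, mul_sum]
  rw [integral_finsetSum _ fun _ _ => Integrable.of_finite]
  refine sum_congr rfl fun σ _ => ?_
  have hp : (fun c : n => (σ c, c)).Injective := fun c c' h => congrArg Prod.snd h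
  rw [integral_const_mul, integral_prod_count_of_injective ν hp]
  ring

theorem expected_det_count_matrix_general (C T : ℕ)
    (ν : Measure (Fin C × Fin C)) [IsProbabilityMeasure ν] :
    (∫ ω : Fin T → Fin C × Fin C,
        (Matrix.of fun c c' : Fin C =>
          ∑ t : Fin T, if ω t = (c, c') then (1 : ℝ) else 0).det
        ∂(Measure.pi fun _ : Fin T => ν))
      = ((T.choose C * Nat.factorial C : ℕ) : ℝ) *
        (Matrix.of fun c c' : Fin C => (ν {(c, c')}).toReal).det := by
  rw [integral_det_countMatrix, Fintype.card_fin, Fintype.card_fin,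
    Nat.descFactorial_eq_factorial_mul_choose, mul_comm (Nat.factorial C)]
  rfl

/-- unbiased estimator of the joint-distribution determinant: for
`T ≥ C` i.i.d. samples from a distribution `ν` on `Fin C × Fin C`, the count matrix
`M(c,c') = Σ_t 1[sample t = (c,c')]` satisfies
`E[det M] = binom(T,C) · C! · det U`, where `U(c,c') = ν {(c,c')}`. -/
theorem expected_det_count_matrix (C T : ℕ) (hT : C ≤ T)
    (ν : Measure (Fin C × Fin C)) [IsProbabilityMeasure ν] :
    (∫ ω : Fin T → Fin C × Fin C,
        (Matrix.of fun c c' : Fin C =>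
          ∑ t : Fin T, if ω t = (c, c') then (1 : ℝ) else 0).det
        ∂(Measure.pi fun _ : Fin T => ν))
      = ((T.choose C * Nat.factorial C : ℕ) : ℝ) *
        (Matrix.of fun c c' : Fin C => (ν {(c, c')}).toReal).det :=
  expected_det_count_matrix_general C T ν
end

section
/- In DMI-Mechanism with T ≥ 2C tasks split into two disjoint parts T_1, T_2 each of size at least C, agent i's expected payment equals Σ_{j≠i} a_1 a_2 · DMI(X̂_i; X̂_j)^2, where a_ℓ = binom(|T_ℓ|, C)·C! and X̂_i, X̂_j are the reported signals. In particular the expected payment is nonnegative. -/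
open MeasureTheory Finset

/-- The count matrix of agents `i` and `j` over the tasks in `Tl`: entry `(c,c')` counts
the tasks `t ∈ Tl` on which agent `i` reports `c` and agent `j` reports `c'`. -/
def countMatrix {C T n : ℕ} (Tl : Finset (Fin T)) (i j : Fin n)
    (ω : Fin T → (Fin n → Fin C)) : Matrix (Fin C) (Fin C) ℝ :=
  Matrix.of fun c c' => ∑ t ∈ Tl, if ω t i = c ∧ ω t j = c' then (1 : ℝ) else 0

/-- Agent `i`'s DMI-Mechanism payment: `p_i = Σ_{j≠i} det(M₁^{ij})·det(M₂^{ij})`. -/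
def payment {C T n : ℕ} (T1 T2 : Finset (Fin T)) (i : Fin n)
    (ω : Fin T → (Fin n → Fin C)) : ℝ :=
  ∑ j ∈ Finset.univ.erase i,
    (countMatrix T1 i j ω).det * (countMatrix T2 i j ω).det

/-- The joint distribution matrix of the reports of agents `i` and `j` under the
per-task report distribution `ν`. -/
noncomputable def reportJointMatrix {C n : ℕ} (ν : Measure (Fin n → Fin C))
    (i j : Fin n) : Matrix (Fin C) (Fin C) ℝ :=
  Matrix.of fun c c' => (ν {f | f i = c ∧ f j = c'}).toReal

/-!
By multilinearity in the rows, `det M_ℓ^{ij}` is the sum, over injective selections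
`e : Fin C ↪ T_ℓ` of one task per row, of the determinant whose row `c` is the indicator that
agents `i, j` report `(c, ·)` on task `e c` (a non-injective selection produces a zero row).
For selections from the disjoint sets `T₁, T₂` the `2C` rows come from distinct i.i.d. tasks,
and the determinant of a matrix with independent rows has expectation the determinant of the
expected matrix; for the block-diagonal matrix built from both selections this gives
`det U · det U`. Counting the selections gives the factors `a_ℓ`.
-/

open Function

section Independence

variable {ι κ X 𝕜 : Type*} [Fintype ι] [Fintype κ] [RCLike 𝕜] {g : κ → ι}

theorem prod_comp_injective_eq_prod_extend (hg : Injective g) (h : κ → X → 𝕜) (ω : ι → X) :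
    ∏ k, h k (ω (g k)) = ∏ t, extend g h 1 t (ω t) :=
  Fintype.prod_of_injective g hg _ _ (fun t ht => by simp [extend_apply' _ _ t ht])
    (fun k => by simp [hg.extend_apply])

variable [MeasurableSpace X] (ν : Measure X) [IsProbabilityMeasure ν]

theorem integrable_prod_comp_injective (hg : Injective g) {h : κ → X → 𝕜}
    (hh : ∀ k, Integrable (h k) ν) :
    Integrable (fun ω => ∏ k, h k (ω (g k))) (Measure.pi fun _ : ι => ν) := by
  simp_rw [prod_comp_injective_eq_prod_extend hg h]
  refine Integrable.fintype_prod fun t => ?_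
  by_cases ht : ∃ k, g k = t
  · obtain ⟨k, rfl⟩ := ht
    simpa [hg.extend_apply] using hh k
  · rw [extend_apply' _ _ t ht]
    exact integrable_const 1

theorem integral_prod_comp_injective (hg : Injective g) (h : κ → X → 𝕜) :
    ∫ ω, ∏ k, h k (ω (g k)) ∂(Measure.pi fun _ : ι => ν) = ∏ k, ∫ x, h k x ∂ν := by
  simp_rw [prod_comp_injective_eq_prod_extend hg h, integral_fintype_prod_eq_prod]
  exact (Fintype.prod_of_injective g hg _ _ (fun t ht => by simp [extend_apply' _ _ t ht])
    (fun k => by simp [hg.extend_apply])).symm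

theorem integral_det_comp_injective [DecidableEq κ] (hg : Injective g) (r : κ → X → κ → 𝕜)
    (hr : ∀ k k', Integrable (fun x => r k x k') ν) :
    ∫ ω, (Matrix.of fun k => r k (ω (g k))).det ∂(Measure.pi fun _ : ι => ν)
      = (Matrix.of fun k k' => ∫ x, r k x k' ∂ν).det := by
  simp_rw [← Matrix.det_transpose (Matrix.of _), Matrix.det_apply', Matrix.transpose_apply,
    Matrix.of_apply]
  rw [integral_finsetSum _ fun σ _ =>
    (integrable_prod_comp_injective ν hg fun k => hr k (σ k)).const_mul _]
  refine sum_congr rfl fun σ _ => ?_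
  rw [integral_const_mul, integral_prod_comp_injective ν hg fun k x => r k x (σ k)]

theorem integral_det_mul_det_comp_injective {κ' : Type*} [Fintype κ'] [DecidableEq κ]
    [DecidableEq κ'] {g' : κ' → ι} (hg : Injective (Sum.elim g g')) (r : κ → X → κ → 𝕜)
    (r' : κ' → X → κ' → 𝕜) (hr : ∀ k k', Integrable (fun x => r k x k') ν)
    (hr' : ∀ k k', Integrable (fun x => r' k x k') ν) :
    ∫ ω, (Matrix.of fun k => r k (ω (g k))).det * (Matrix.of fun k => r' k (ω (g' k))).det
        ∂(Measure.pi fun _ : ι => ν)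
      = (Matrix.of fun k k' => ∫ x, r k x k' ∂ν).det
        * (Matrix.of fun k k' => ∫ x, r' k x k' ∂ν).det := by
  -- rows of the block-diagonal matrix `fromBlocks (r-matrix) 0 0 (r'-matrix)`
  let R : κ ⊕ κ' → X → κ ⊕ κ' → 𝕜 :=
    Sum.elim (fun k x => Sum.elim (r k x) 0) (fun k x => Sum.elim 0 (r' k x))
  have hR : ∀ k k', Integrable (fun x => R k x k') ν := by
    rintro (k | k) (k' | k')
    exacts [hr k k', integrable_zero _ _ _, integrable_zero _ _ _, hr' k k']
  have hblocks : ∀ ω : ι → X,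
      (Matrix.of fun k => r k (ω (g k))).det * (Matrix.of fun k => r' k (ω (g' k))).det
        = (Matrix.of fun k => R k (ω (Sum.elim g g' k))).det := by
    intro ω
    rw [← Matrix.det_fromBlocks_zero₂₁ _ 0]
    congr
    ext (k | k) (k' | k') <;> rfl
  have hmean : (Matrix.of fun k k' => ∫ x, R k x k' ∂ν)
      = Matrix.fromBlocks (Matrix.of fun k k' => ∫ x, r k x k' ∂ν) 0 0
          (Matrix.of fun k k' => ∫ x, r' k x k' ∂ν) := by
    ext (k | k) (k' | k') <;> simp [R]
  simp_rw [hblocks]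
  rw [integral_det_comp_injective ν hg R hR, hmean, Matrix.det_fromBlocks_zero₂₁]

end Independence

theorem Matrix.det_of_sum_rows {κ α R : Type*} [Fintype κ] [DecidableEq κ] [Fintype α]
    [CommRing R] (v : κ → α → κ → R) :
    (Matrix.of fun k => ∑ a, v k a).det = ∑ f : κ → α, (Matrix.of fun k => v k (f k)).det :=
  Matrix.detRowAlternating.toMultilinearMap.map_sum v

theorem Fintype.sum_eq_sum_embedding_of_not_injective {κ α M : Type*} [Fintype κ] [Fintype α]
    [DecidableEq κ] [DecidableEq α] [AddCommMonoid M] (F : (κ → α) → M)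
    (hF : ∀ f, ¬Injective f → F f = 0) : ∑ f, F f = ∑ e : κ ↪ α, F e := by
  rw [← sum_filter_of_ne (p := Injective) fun f _ hf => by_contra fun h => hf (hF f h),
    sum_subtype (p := Injective) _ (fun f => by simp) F]
  exact Fintype.sum_equiv (Equiv.subtypeInjectiveEquivEmbedding κ α) _ _ fun _ => rfl

section DMI

variable {C T n : ℕ}

def reportIndicator (i j : Fin n) (x : Fin n → Fin C) (c c' : Fin C) : ℝ :=
  if x i = c ∧ x j = c' then 1 else 0

theorem countMatrix_eq_sum (Tl : Finset (Fin T)) (i j : Fin n) (ω : Fin T → Fin n → Fin C) :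
    countMatrix Tl i j ω = Matrix.of fun c => ∑ t : Tl, reportIndicator i j (ω t) c := by
  ext c c'
  simp only [countMatrix, reportIndicator, Matrix.of_apply, Finset.sum_apply]
  exact (sum_coe_sort Tl _).symm

theorem det_reportIndicator_eq_zero_of_not_injective (i j : Fin n) {y : Fin C → Fin n → Fin C}
    (hy : ¬Injective y) : (Matrix.of fun c => reportIndicator i j (y c) c).det = 0 := by
  obtain ⟨c, c', hyc, hcc'⟩ : ∃ c c', y c = y c' ∧ c ≠ c' := by
    simpa [Injective] using hy
  -- row `d` vanishes unless `y d i = d`, which cannot hold for both `c` and `c'`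
  by_cases hc : y c i = c
  · refine Matrix.det_eq_zero_of_row_eq_zero c' fun d => if_neg fun h => hcc' ?_
    rw [← hc, hyc, h.1]
  · exact Matrix.det_eq_zero_of_row_eq_zero c fun d => if_neg fun h => hc h.1

theorem det_countMatrix (Tl : Finset (Fin T)) (i j : Fin n) (ω : Fin T → Fin n → Fin C) :
    (countMatrix Tl i j ω).det
      = ∑ e : Fin C ↪ Tl, (Matrix.of fun c => reportIndicator i j (ω (e c)) c).det := by
  rw [countMatrix_eq_sum, Matrix.det_of_sum_rows]
  exact Fintype.sum_eq_sum_embedding_of_not_injective _ fun f hf =>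
    det_reportIndicator_eq_zero_of_not_injective i j fun h =>
      hf (Injective.of_comp (f := fun t : Tl => ω t) h)

theorem reportJointMatrix_eq_integral (ν : Measure (Fin n → Fin C)) (i j : Fin n) :
    reportJointMatrix ν i j = Matrix.of fun c c' => ∫ x, reportIndicator i j x c c' ∂ν := by
  ext c c'
  rw [reportJointMatrix, Matrix.of_apply, Matrix.of_apply, ← measureReal_def,
    ← integral_indicator_one (Set.toFinite _).measurableSet]
  congr with x
  simp [Set.indicator_apply, reportIndicator]

theorem integral_det_mul_det_of_disjoint (ν : Measure (Fin n → Fin C)) [IsProbabilityMeasure ν]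
    (i j : Fin n) {T1 T2 : Finset (Fin T)} (hdisj : Disjoint T1 T2) (e₁ : Fin C ↪ T1)
    (e₂ : Fin C ↪ T2) :
    ∫ ω, (Matrix.of fun c => reportIndicator i j (ω (e₁ c)) c).det
        * (Matrix.of fun c => reportIndicator i j (ω (e₂ c)) c).det
        ∂(Measure.pi fun _ : Fin T => ν)
      = (reportJointMatrix ν i j).det * (reportJointMatrix ν i j).det := by
  have hinj : Injective (Sum.elim (fun c => (e₁ c : Fin T)) fun c => (e₂ c : Fin T)) :=
    (Subtype.val_injective.comp e₁.injective).sumElim (Subtype.val_injective.comp e₂.injective)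
      fun a b (hab : (e₁ a : Fin T) = e₂ b) => disjoint_left.1 hdisj (e₁ a).2 (hab ▸ (e₂ b).2)
  rw [reportJointMatrix_eq_integral]
  exact integral_det_mul_det_comp_injective ν hinj (fun c x => reportIndicator i j x c)
    (fun c x => reportIndicator i j x c) (fun _ _ => .of_finite) (fun _ _ => .of_finite)

theorem card_embedding_finset {α : Type*} (s : Finset α) :
    Fintype.card (Fin C ↪ s) = s.card.choose C * C.factorial := by
  rw [Fintype.card_embedding_eq, Fintype.card_coe, Fintype.card_fin,
    Nat.descFactorial_eq_factorial_mul_choose, mul_comm]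

theorem integral_det_countMatrix_mul (ν : Measure (Fin n → Fin C)) [IsProbabilityMeasure ν]
    (i j : Fin n) {T1 T2 : Finset (Fin T)} (hdisj : Disjoint T1 T2) :
    ∫ ω, (countMatrix T1 i j ω).det * (countMatrix T2 i j ω).det ∂(Measure.pi fun _ : Fin T => ν)
      = ((T1.card.choose C * C.factorial : ℕ) : ℝ) * ((T2.card.choose C * C.factorial : ℕ) : ℝ)
        * |(reportJointMatrix ν i j).det| ^ 2 := by
  simp_rw [det_countMatrix, sum_mul_sum]
  rw [integral_finsetSum _ fun _ _ => .of_finite]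
  simp_rw [integral_finsetSum _ fun _ _ => .of_finite,
    integral_det_mul_det_of_disjoint ν i j hdisj]
  simp only [sum_const, card_univ, card_embedding_finset, nsmul_eq_mul, sq_abs]
  ring

end DMI

theorem expected_payment_DMI_general (C T n : ℕ) (i : Fin n)
    (ν : Measure (Fin n → Fin C)) [IsProbabilityMeasure ν]
    (T1 T2 : Finset (Fin T)) (hdisj : Disjoint T1 T2) :
    (∫ ω, payment T1 T2 i ω ∂(Measure.pi fun _ : Fin T => ν))
      = ∑ j ∈ Finset.univ.erase i,
          ((T1.card.choose C * Nat.factorial C : ℕ) : ℝ) *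
          ((T2.card.choose C * Nat.factorial C : ℕ) : ℝ) *
          |(reportJointMatrix ν i j).det| ^ 2 ∧
    0 ≤ ∫ ω, payment T1 T2 i ω ∂(Measure.pi fun _ : Fin T => ν) := by
  have hpayment : ∫ ω, payment T1 T2 i ω ∂(Measure.pi fun _ : Fin T => ν)
      = ∑ j ∈ Finset.univ.erase i,
          ((T1.card.choose C * Nat.factorial C : ℕ) : ℝ) *
          ((T2.card.choose C * Nat.factorial C : ℕ) : ℝ) *
          |(reportJointMatrix ν i j).det| ^ 2 := by
    unfold payment
    rw [integral_finsetSum _ fun _ _ => .of_finite]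
    exact sum_congr rfl fun j _ => integral_det_countMatrix_mul ν i j hdisj
  exact ⟨hpayment, hpayment ▸ sum_nonneg fun j _ => by positivity⟩

/-- in the DMI-Mechanism with `T ≥ 2C` tasks split into two disjoint parts
`T₁, T₂`, each of size at least `C`, and tasks i.i.d. with per-task report distribution
`ν`, agent `i`'s expected payment equals
`Σ_{j≠i} a₁ a₂ · DMI(X̂_i; X̂_j)²` with `a_ℓ = binom(|T_ℓ|,C)·C!`; in particular it is
nonnegative. -/
theorem expected_payment_DMI (C T n : ℕ) (hT : 2 * C ≤ T) (i : Fin n)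
    (ν : Measure (Fin n → Fin C)) [IsProbabilityMeasure ν]
    (T1 T2 : Finset (Fin T)) (hdisj : Disjoint T1 T2)
    (h1 : C ≤ T1.card) (h2 : C ≤ T2.card) :
    (∫ ω, payment T1 T2 i ω ∂(Measure.pi fun _ : Fin T => ν))
      = ∑ j ∈ Finset.univ.erase i,
          ((T1.card.choose C * Nat.factorial C : ℕ) : ℝ) *
          ((T2.card.choose C * Nat.factorial C : ℕ) : ℝ) *
          |(reportJointMatrix ν i j).det| ^ 2 ∧
    0 ≤ ∫ ω, payment T1 T2 i ω ∂(Measure.pi fun _ : Fin T => ν) :=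
  expected_payment_DMI_general C T n i ν T1 T2 hdisj
end

section
/- Dominant truthfulness inequality: if each agent's report X̂_i is conditionally independent of other agents' reports given her private signal X_i, then for every agent i, Σ_{j≠i} DMI(X̂_i; X̂_j)^2 ≤ Σ_{j≠i} DMI(X_i; X̂_j)^2, i.e., reporting X_i (truth-telling) weakly maximizes her expected DMI-Mechanism payment regardless of others' strategies. -/
/-!
Conditional independence factors the joint law of `(X̂ᵢ, X̂ⱼ)` through `Xᵢ`:
`U_{X̂ᵢ,X̂ⱼ} = T * U_{Xᵢ,X̂ⱼ}`, where column `x` of `T` is the law of `X̂ᵢ` given `Xᵢ = x`.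
`T` is nonnegative with column sums at most one, so expanding `det T` over permutations and
dominating by the sum over all maps gives `|det T| ≤ ∏ₓ ∑_{x'} T x' x ≤ 1`. Hence every term
`DMI(X̂ᵢ; X̂ⱼ)` is at most `DMI(Xᵢ; X̂ⱼ)`.
-/

open MeasureTheory

open ProbabilityTheory

namespace Matrix

variable {n R : Type*} [Fintype n] [DecidableEq n] [CommRing R] [LinearOrder R]
  [IsStrictOrderedRing R]

theorem abs_det_le_one_of_nonneg_of_sum_col_le_one {T : Matrix n n R} (h0 : ∀ i j, 0 ≤ T i j)
    (h1 : ∀ j, ∑ i, T i j ≤ 1) : |T.det| ≤ 1 := by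
  have hprod (f : n → n) : 0 ≤ ∏ j, T (f j) j := Finset.prod_nonneg fun j _ => h0 (f j) j
  calc |T.det| ≤ ∑ σ : Equiv.Perm n, |Equiv.Perm.sign σ • ∏ j, T (σ j) j| := by
        rw [det_apply]; exact Finset.abs_sum_le_sum_abs _ _
    _ = ∑ σ : Equiv.Perm n, ∏ j, T (σ j) j := by
        refine Fintype.sum_congr _ _ fun σ => ?_
        rw [Units.smul_def, abs_zsmul, Int.isUnit_iff_abs_eq.mp (Equiv.Perm.sign σ).isUnit,
          one_smul, abs_of_nonneg (hprod σ)]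
    _ ≤ ∑ f : n → n, ∏ j, T (f j) j :=
        (Finset.sum_map _ ⟨_, DFunLike.coe_injective⟩ fun f : n → n => ∏ j, T (f j) j).symm
          |>.trans_le (Finset.sum_le_univ_sum_of_nonneg hprod)
    _ = ∏ j, ∑ i, T i j := (Fintype.prod_sum fun j i => T i j).symm
    _ ≤ 1 := Finset.prod_le_one (fun j _ => Finset.sum_nonneg fun i _ => h0 i j) fun j _ => h1 j

end Matrix

section

variable {Ω : Type*} [MeasurableSpace Ω] (μ : Measure Ω)

theorem sum_measure_inter_preimage_singleton {α : Type*} [Fintype α] [MeasurableSpace α]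
    [MeasurableSingletonClass α] {X : Ω → α} (hX : Measurable X) (E : Set Ω) :
    ∑ x, μ (X ⁻¹' {x} ∩ E) = μ E := by
  have h := sum_measure_preimage_singleton (μ := μ.restrict E) Finset.univ
    fun x _ => hX (measurableSet_singleton x)
  simpa only [Measure.restrict_apply (hX (measurableSet_singleton _)), Finset.coe_univ,
    Set.preimage_univ, Measure.restrict_apply_univ] using h

theorem cond_mul_measure_inter_of_mul_eq [IsFiniteMeasure μ] {s A B : Set Ω}
    (hs : MeasurableSet s) (h : μ s * μ (A ∩ (B ∩ s)) = μ (A ∩ s) * μ (B ∩ s)) :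
    μ[A | s] * μ (s ∩ B) = μ (A ∩ (B ∩ s)) := by
  rcases eq_or_ne (μ s) 0 with hs0 | hs0
  · have hB : μ (s ∩ B) = 0 := measure_mono_null Set.inter_subset_left hs0
    rw [hB, mul_zero, measure_mono_null (fun ω h => h.2.2) hs0]
  · rw [cond_apply hs, Set.inter_comm s A, Set.inter_comm s B, mul_assoc, ← h,
      ENNReal.inv_mul_cancel_left hs0 (measure_ne_top μ s)]

variable {C : ℕ}

/-- `Y ⊥ Z | X` for a discrete `X`, multiplied out so that no division occurs. -/
def DiscreteCondIndep (Y Z X : Ω → Fin C) : Prop :=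
  ∀ x y z, μ {ω | X ω = x} * μ {ω | Y ω = y ∧ Z ω = z ∧ X ω = x} =
    μ {ω | Y ω = y ∧ X ω = x} * μ {ω | Z ω = z ∧ X ω = x}

/-- A null fibre `X = x` gives a zero column, since `μ[|s] = 0` when `μ s = 0`. -/
noncomputable def condMatrix (X Y : Ω → Fin C) : Matrix (Fin C) (Fin C) ℝ :=
  Matrix.of fun y x => μ[|X ⁻¹' {x}].real (Y ⁻¹' {y})

theorem sum_condMatrix_le_one {X Y : Ω → Fin C} (hY : Measurable Y) (x : Fin C) :
    ∑ y, condMatrix μ X Y y x ≤ 1 := by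
  simp only [condMatrix, Matrix.of_apply]
  rw [sum_measureReal_preimage_singleton _ fun y _ => hY (measurableSet_singleton y)]
  exact measureReal_le_one

variable [IsFiniteMeasure μ]

theorem jointMatrix_eq_condMatrix_mul {X Y Z : Ω → Fin C} (hX : Measurable X)
    (hci : DiscreteCondIndep μ Y Z X) :
    jointMatrix μ Y Z = condMatrix μ X Y * jointMatrix μ X Z := by
  ext y z
  have hterm (x : Fin C) : μ[Y ⁻¹' {y} | X ⁻¹' {x}] * μ {ω | X ω = x ∧ Z ω = z} =
      μ (X ⁻¹' {x} ∩ (Y ⁻¹' {y} ∩ Z ⁻¹' {z})) := by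
    rw [Set.inter_comm, Set.inter_assoc]
    exact cond_mul_measure_inter_of_mul_eq μ (hX (measurableSet_singleton x)) (hci x y z)
  simp only [jointMatrix, condMatrix, Matrix.mul_apply, Matrix.of_apply, measureReal_def,
    ← ENNReal.toReal_mul, hterm]
  rw [← ENNReal.toReal_sum fun x _ => measure_ne_top μ _,
    sum_measure_inter_preimage_singleton μ hX]
  rfl

theorem DMI_le_of_discreteCondIndep {X Y Z : Ω → Fin C} (hX : Measurable X) (hY : Measurable Y)
    (hci : DiscreteCondIndep μ Y Z X) : DMI μ Y Z ≤ DMI μ X Z := by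
  rw [DMI, DMI, jointMatrix_eq_condMatrix_mul μ hX hci, Matrix.det_mul, abs_mul]
  refine mul_le_of_le_one_left (abs_nonneg _)
    (Matrix.abs_det_le_one_of_nonneg_of_sum_col_le_one (fun _ _ => measureReal_nonneg) ?_)
  exact sum_condMatrix_le_one μ hY

end

/-- dominant truthfulness inequality: if agent `i`'s report `X̂ᵢ` is
conditionally independent of every other agent's report given her private signal `Xᵢ`,
then `Σ_{j≠i} DMI(X̂ᵢ; X̂ⱼ)² ≤ Σ_{j≠i} DMI(Xᵢ; X̂ⱼ)²`: truth-telling weakly maximizes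
her expected DMI-Mechanism payment regardless of others' strategies. -/
theorem dominant_truthfulness_ineq {Ω : Type*} [MeasurableSpace Ω] (μ : Measure Ω)
    [IsProbabilityMeasure μ] {C n : ℕ} (i : Fin n)
    (X Xhat : Fin n → Ω → Fin C)
    (hX : ∀ k, Measurable (X k)) (hXhat : ∀ k, Measurable (Xhat k))
    (hci : ∀ j, j ≠ i → ∀ x x' y,
      μ {ω | X i ω = x} * μ {ω | Xhat i ω = x' ∧ Xhat j ω = y ∧ X i ω = x} =
        μ {ω | Xhat i ω = x' ∧ X i ω = x} * μ {ω | Xhat j ω = y ∧ X i ω = x}) :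
    ∑ j ∈ Finset.univ.erase i, DMI μ (Xhat i) (Xhat j) ^ 2
      ≤ ∑ j ∈ Finset.univ.erase i, DMI μ (X i) (Xhat j) ^ 2 := by
  refine Finset.sum_le_sum fun j hj => ?_
  have hmono : DMI μ (Xhat i) (Xhat j) ≤ DMI μ (X i) (Xhat j) :=
    DMI_le_of_discreteCondIndep μ (hX i) (hXhat i) (hci j (Finset.ne_of_mem_erase hj))
  exact pow_le_pow_left₀ (abs_nonneg _) hmono 2
end
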